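/- Let n ≥ 1 be an integer, set β = β̂_{n+1/2} and ã_n = ((n+1/2)² − β̂_{n+1/2})/(2n+1). Then the set of C² solutions (x,y): ℝ → ℝ² of the system (E_{β̂_{n+1/2}}) satisfying the anti-periodicity condition x(t+2π) = −x(t), y(t+2π) = −y(t) for all t is exactly the real linear span of the two solutions t ↦ (ã_n sin((n+1/2)t), cos((n+1/2)t)) and t ↦ (ã_n cos((n+1/2)t), −sin((n+1/2)t)). -/

import Mathlib

/-!
In first-order form the system is `F' = L_β F` on positions and velocities in `ℝ⁴`. When `iω` is a
characteristic root, the characteristic polynomial of `L_β` factors as `(λ² + ω²)(λ² - r²)` with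
`r² = β - 1 + ω²`, which is positive for `β = β̂_ω`, `ω > 1`. Every solution is therefore a
combination of two rotation modes of frequency `ω` and two exponential modes `e^{±rt} v±`. For
`ω = n + 1/2` the rotation modes are `2π`-anti-periodic, while an anti-periodic combination of the
exponential modes vanishes because `e^{±2πr} ≠ -1`. The positions of the rotation modes are the two
functions spanning the kernel.
-/

open Real Function

namespace EulerSystem

section LinearODE

variable {E : Type*} [NormedAddCommGroup E] [NormedSpace ℝ E] {A : E →L[ℝ] E} {F G : ℝ → E}

def IsSolution (A : E →L[ℝ] E) (F : ℝ → E) : Prop :=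
  ∀ t, HasDerivAt F (A (F t)) t

theorem IsSolution.eq_of_apply_zero_eq (hF : IsSolution A F) (hG : IsSolution A G)
    (h : F 0 = G 0) : F = G :=
  ODE_solution_unique_univ (v := fun _ => A) (s := fun _ => Set.univ)
    (fun _ => A.lipschitz.lipschitzOnWith) (fun t => ⟨hF t, trivial⟩) (fun t => ⟨hG t, trivial⟩) h

theorem IsSolution.add (hF : IsSolution A F) (hG : IsSolution A G) : IsSolution A (F + G) :=
  fun t => by simpa only [Pi.add_apply, map_add] using (hF t).add (hG t)

theorem IsSolution.const_smul (c : ℝ) (hF : IsSolution A F) : IsSolution A (c • F) :=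
  fun t => by simpa only [Pi.smul_apply, map_smul] using (hF t).const_smul c

theorem IsSolution.contDiff (hF : IsSolution A F) (n : ℕ) : ContDiff ℝ n F := by
  induction n with
  | zero => exact contDiff_zero.mpr (continuous_iff_continuousAt.mpr fun t => (hF t).continuousAt)
  | succ n ih =>
    have hderiv : deriv F = A ∘ F := funext fun t => (hF t).deriv
    rw [Nat.cast_succ, contDiff_succ_iff_deriv, hderiv]
    refine ⟨fun t => (hF t).differentiableAt, by simp, ?_⟩
    exact A.contDiff.comp ih

theorem isSolution_exp_smul {c : ℝ} {v : E} (hv : A v = c • v) :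
    IsSolution A (fun t => exp (c * t) • v) := fun t => by
  convert ((hasDerivAt_id' t).const_mul c).exp.smul_const v using 1
  rw [map_smul, hv, smul_smul, mul_one, mul_comm]

noncomputable def rotMode (ω : ℝ) (u w : E) (t : ℝ) : E := cos (ω * t) • u + sin (ω * t) • w

theorem isSolution_rotMode {ω : ℝ} {u w : E} (hu : A u = ω • w) (hw : A w = -ω • u) :
    IsSolution A (rotMode ω u w) := fun t => by
  have hcos := ((hasDerivAt_id' t).const_mul ω).cos.smul_const u
  have hsin := ((hasDerivAt_id' t).const_mul ω).sin.smul_const w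
  refine (hcos.add hsin).congr_deriv ?_
  rw [rotMode, map_add, map_smul, map_smul, hu, hw]
  module

theorem _root_.Function.Antiperiodic.deriv {f : ℝ → E} {c : ℝ} (h : Antiperiodic f c) :
    Antiperiodic (deriv f) c := fun x => by
  rw [← deriv_comp_add_const, h.funext, deriv.neg]

section HalfOddFrequency

variable {n : ℕ} {ω : ℝ}

theorem antiperiodic_sin_mul (hω : ω = n + 1 / 2) :
    Antiperiodic (fun t => sin (ω * t)) (2 * π) := by
  have hω0 : ω ≠ 0 := by rw [hω]; positivity
  have h2π : ω⁻¹ * (n * (2 * π) + π) = 2 * π := by rw [hω]; field_simp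
  exact h2π ▸ (sin_antiperiodic.nat_odd_mul_antiperiodic n).const_mul hω0

theorem antiperiodic_cos_mul (hω : ω = n + 1 / 2) :
    Antiperiodic (fun t => cos (ω * t)) (2 * π) := by
  have hω0 : ω ≠ 0 := by rw [hω]; positivity
  have h2π : ω⁻¹ * (n * (2 * π) + π) = 2 * π := by rw [hω]; field_simp
  exact h2π ▸ (cos_antiperiodic.nat_odd_mul_antiperiodic n).const_mul hω0

theorem antiperiodic_rotMode (hω : ω = n + 1 / 2) (u w : E) :
    Antiperiodic (rotMode ω u w) (2 * π) := fun t => by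
  simp only [rotMode, antiperiodic_cos_mul hω t, antiperiodic_sin_mul hω t, neg_smul, neg_add]

end HalfOddFrequency

end LinearODE

theorem exists_mul_add_mul_eq {a b c d : ℝ} (h : a * d - b * c ≠ 0) (x y : ℝ) :
    ∃ s t, a * s + b * t = x ∧ c * s + d * t = y :=
  ⟨(d * x - b * y) / (a * d - b * c), (a * y - c * x) / (a * d - b * c),
    by rw [mul_div_assoc', mul_div_assoc', ← add_div, div_eq_iff h]; ring,
    by rw [mul_div_assoc', mul_div_assoc', ← add_div, div_eq_iff h]; ring⟩

/-- Positions and velocities. -/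
abbrev State := (ℝ × ℝ) × (ℝ × ℝ)

noncomputable def eulerField (β : ℝ) : State →L[ℝ] State :=
  LinearMap.toContinuousLinearMap
    { toFun := fun v => (v.2, ((2 * β + 3) * v.1.1 + 2 * v.2.2, -β * v.1.2 - 2 * v.2.1))
      map_add' := fun v w => by ext <;> simp only [Prod.fst_add, Prod.snd_add] <;> ring
      map_smul' := fun c v => by
        ext <;> simp only [Prod.smul_fst, Prod.smul_snd, smul_eq_mul, RingHom.id_apply] <;> ring }

@[simp]
theorem eulerField_apply (β : ℝ) (v : State) :
    eulerField β v = (v.2, ((2 * β + 3) * v.1.1 + 2 * v.2.2, -β * v.1.2 - 2 * v.2.1)) :=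
  rfl

def SolvesEuler (β : ℝ) (f : ℝ → ℝ × ℝ) : Prop :=
  ∀ t, (deriv (deriv f) t).1 = (2 * β + 3) * (f t).1 + 2 * (deriv f t).2 ∧
    (deriv (deriv f) t).2 = -β * (f t).2 - 2 * (deriv f t).1

variable {β : ℝ}

theorem isSolution_of_solvesEuler {f : ℝ → ℝ × ℝ} (hf : ContDiff ℝ 2 f) (h : SolvesEuler β f) :
    IsSolution (eulerField β) (fun t => (f t, deriv f t)) := fun t => by
  have hf' : ContDiff ℝ 1 (deriv f) := (contDiff_succ_iff_deriv (n := 1).mp hf).2.2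
  refine ((hf.differentiable two_ne_zero t).hasDerivAt.prodMk
    (hf'.differentiable one_ne_zero t).hasDerivAt).congr_deriv ?_
  rw [eulerField_apply, ← (h t).1, ← (h t).2]

theorem IsSolution.solvesEuler_fst {F : ℝ → State} (hF : IsSolution (eulerField β) F) :
    ContDiff ℝ 2 (fun t => (F t).1) ∧ SolvesEuler β (fun t => (F t).1) := by
  have hd : deriv (fun t => (F t).1) = fun t => (F t).2 :=
    funext fun t => ((hasFDerivAt_fst (𝕜 := ℝ) (p := F t)).comp_hasDerivAt t (hF t)).deriv
  have hdd : deriv (fun t => (F t).2) = fun t => (eulerField β (F t)).2 :=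
    funext fun t => ((hasFDerivAt_snd (𝕜 := ℝ) (p := F t)).comp_hasDerivAt t (hF t)).deriv
  refine ⟨contDiff_fst.comp (hF.contDiff 2), fun t => ?_⟩
  simp only [hd, hdd, eulerField_apply, and_self]

-- `rotVec₁ a ω` and `rotVec₂ a ω` are the initial states of `t ↦ (a sin ωt, cos ωt)` and
-- `t ↦ (a cos ωt, -sin ωt)`.
def rotVec₁ (a ω : ℝ) : State := ((0, 1), (a * ω, 0))

def rotVec₂ (a ω : ℝ) : State := ((a, 0), (0, -ω))

/-- `(2c, c² - 2β - 3)` spans the kernel of the characteristic matrix of `(E_β)` at `λ = c`. -/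
def expVec (β c : ℝ) : State :=
  ((2 * c, c ^ 2 - 2 * β - 3), (2 * c ^ 2, c * (c ^ 2 - 2 * β - 3)))

variable {ω a r : ℝ}

theorem eulerField_rotVec₁ (h₁ : β + 2 * a * ω = ω ^ 2) :
    eulerField β (rotVec₁ a ω) = ω • rotVec₂ a ω := by
  simp only [rotVec₁, rotVec₂, eulerField_apply, Prod.smul_mk, smul_eq_mul, Prod.mk.injEq]
  refine ⟨⟨by ring, by ring⟩, by ring, by linear_combination -h₁⟩

theorem eulerField_rotVec₂ (h₂ : a * (ω ^ 2 + 2 * β + 3) = 2 * ω) :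
    eulerField β (rotVec₂ a ω) = -ω • rotVec₁ a ω := by
  simp only [rotVec₁, rotVec₂, eulerField_apply, Prod.smul_mk, smul_eq_mul, Prod.mk.injEq]
  refine ⟨⟨by ring, by ring⟩, by linear_combination h₂, by ring⟩

theorem eulerField_expVec {c : ℝ} (h : (c ^ 2 + β) * (c ^ 2 - 2 * β - 3) + 4 * c ^ 2 = 0) :
    eulerField β (expVec β c) = c • expVec β c := by
  simp only [expVec, eulerField_apply, Prod.smul_mk, smul_eq_mul, Prod.mk.injEq]
  refine ⟨⟨by ring, trivial⟩, by ring, by linear_combination -h⟩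

theorem eulerField_expVec_of_sq_eq {c : ℝ} (h₁ : β + 2 * a * ω = ω ^ 2)
    (h₂ : a * (ω ^ 2 + 2 * β + 3) = 2 * ω) (hc : c ^ 2 = β - 1 + ω ^ 2) :
    eulerField β (expVec β c) = c • expVec β c :=
  eulerField_expVec (by rw [hc]; linear_combination -(ω ^ 2 + 2 * β + 3) * h₁ + 2 * ω * h₂)

theorem exists_eq_rotVec_expVec (hω : ω ≠ 0) (hr : r ≠ 0) (h₁ : β + 2 * a * ω = ω ^ 2)
    (h₂ : a * (ω ^ 2 + 2 * β + 3) = 2 * ω) (hr2 : r ^ 2 = β - 1 + ω ^ 2) (v : State) :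
    ∃ c₁ c₂ c₃ c₄ : ℝ,
      c₁ • rotVec₁ a ω + c₂ • rotVec₂ a ω + c₃ • expVec β r + c₄ • expVec β (-r) = v := by
  have ha : a ≠ 0 := by
    rintro rfl
    exact hω (by linarith)
  have hchar : (ω ^ 2 + 2 * β + 3) * (ω ^ 2 - β) = 4 * ω ^ 2 := by
    linear_combination -(ω ^ 2 + 2 * β + 3) * h₁ + 2 * ω * h₂
  have hδ₁ : 1 * (2 * r ^ 2) - (r ^ 2 - 2 * β - 3) * (a * ω) ≠ 0 := by
    have key : (1 * (2 * r ^ 2) - (r ^ 2 - 2 * β - 3) * (a * ω)) * (r ^ 2 + β)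
        = 2 * r ^ 2 * (r ^ 2 + ω ^ 2) := by
      rw [show a * ω = (ω ^ 2 - β) / 2 by linarith, hr2]
      linear_combination (-(ω ^ 2 - β) / 2) * hchar
    intro h0
    rw [h0, zero_mul] at key
    have : 0 < 2 * r ^ 2 * (r ^ 2 + ω ^ 2) := by positivity
    linarith
  have hδ₂ : a * (r * (r ^ 2 - 2 * β - 3)) - 2 * r * -ω ≠ 0 := by
    rw [show a * (r * (r ^ 2 - 2 * β - 3)) - 2 * r * -ω = a * r * (r ^ 2 + ω ^ 2) by
      linear_combination -r * h₂]
    exact mul_ne_zero (mul_ne_zero ha hr) (by positivity)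
  -- In coordinates the equation splits into `2 × 2` systems for `(c₁, c₃ + c₄)` and `(c₂, c₃ - c₄)`.
  obtain ⟨c₁, S, hy₀, hx₁⟩ := exists_mul_add_mul_eq hδ₁ v.1.2 v.2.1
  obtain ⟨c₂, D, hx₀, hy₁⟩ := exists_mul_add_mul_eq hδ₂ v.1.1 v.2.2
  refine ⟨c₁, c₂, (S + D) / 2, (S - D) / 2, ?_⟩
  ext <;> simp only [rotVec₁, rotVec₂, expVec, Prod.fst_add, Prod.snd_add, Prod.smul_fst,
    Prod.smul_snd, smul_eq_mul]
  · linear_combination hx₀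
  · linear_combination hy₀
  · linear_combination hx₁
  · linear_combination hy₁

theorem isSolution_rotMode₁ (h₁ : β + 2 * a * ω = ω ^ 2) (h₂ : a * (ω ^ 2 + 2 * β + 3) = 2 * ω) :
    IsSolution (eulerField β) (rotMode ω (rotVec₁ a ω) (rotVec₂ a ω)) :=
  isSolution_rotMode (eulerField_rotVec₁ h₁) (eulerField_rotVec₂ h₂)

theorem isSolution_rotMode₂ (h₁ : β + 2 * a * ω = ω ^ 2) (h₂ : a * (ω ^ 2 + 2 * β + 3) = 2 * ω) :
    IsSolution (eulerField β) (rotMode ω (rotVec₂ a ω) (-rotVec₁ a ω)) :=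
  isSolution_rotMode (by rw [eulerField_rotVec₂ h₂, neg_smul, smul_neg])
    (by rw [map_neg, eulerField_rotVec₁ h₁, neg_smul])

theorem eq_zero_of_smul_expVec_antiperiodic {T c₃ c₄ : ℝ} (hr : r ≠ 0)
    (h : c₃ • exp (r * T) • expVec β r + c₄ • exp (-r * T) • expVec β (-r) =
      -(c₃ • expVec β r + c₄ • expVec β (-r))) : c₃ = 0 ∧ c₄ = 0 := by
  have hx := congrArg (fun v : State => v.1.1) h
  have hx' := congrArg (fun v : State => v.2.1) h
  simp only [expVec, Prod.fst_add, Prod.snd_add, Prod.smul_fst, Prod.smul_snd, Prod.fst_neg,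
    Prod.snd_neg, smul_eq_mul] at hx hx'
  have h₃ : c₃ * (4 * r ^ 2 * (exp (r * T) + 1)) = 0 := by linear_combination r * hx + hx'
  have h₄ : c₄ * (4 * r ^ 2 * (exp (-r * T) + 1)) = 0 := by linear_combination hx' - r * hx
  exact ⟨(mul_eq_zero.mp h₃).resolve_right (by positivity),
    (mul_eq_zero.mp h₄).resolve_right (by positivity)⟩

theorem IsSolution.exists_eq_rotMode {n : ℕ} (hω : ω = n + 1 / 2) (hr : r ≠ 0)
    (h₁ : β + 2 * a * ω = ω ^ 2) (h₂ : a * (ω ^ 2 + 2 * β + 3) = 2 * ω)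
    (hr2 : r ^ 2 = β - 1 + ω ^ 2) {F : ℝ → State} (hF : IsSolution (eulerField β) F)
    (hanti : F (2 * π) = -F 0) :
    ∃ c₁ c₂ : ℝ,
      F = c₁ • rotMode ω (rotVec₁ a ω) (rotVec₂ a ω) +
        c₂ • rotMode ω (rotVec₂ a ω) (-rotVec₁ a ω) := by
  have hω0 : ω ≠ 0 := by rw [hω]; positivity
  obtain ⟨c₁, c₂, c₃, c₄, hv⟩ := exists_eq_rotVec_expVec hω0 hr h₁ h₂ hr2 (F 0)
  set R := c₁ • rotMode ω (rotVec₁ a ω) (rotVec₂ a ω) +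
    c₂ • rotMode ω (rotVec₂ a ω) (-rotVec₁ a ω)
  set X := c₃ • (fun t => exp (r * t) • expVec β r) +
    c₄ • (fun t => exp (-r * t) • expVec β (-r))
  have hR : IsSolution (eulerField β) R :=
    ((isSolution_rotMode₁ h₁ h₂).const_smul c₁).add ((isSolution_rotMode₂ h₁ h₂).const_smul c₂)
  have hX : IsSolution (eulerField β) X :=
    ((isSolution_exp_smul (eulerField_expVec_of_sq_eq h₁ h₂ hr2)).const_smul c₃).add
      ((isSolution_exp_smul
        (eulerField_expVec_of_sq_eq h₁ h₂ ((neg_sq r).trans hr2))).const_smul c₄)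
  have hFRX : F = R + X := hF.eq_of_apply_zero_eq (hR.add hX) <| by
    simp [R, X, rotMode, ← hv, add_assoc]
  have hRanti : R (2 * π) = -R 0 := by
    simp only [R, Pi.add_apply, Pi.smul_apply, (antiperiodic_rotMode (E := State) hω _ _).eq,
      smul_neg, neg_add]
  have hXanti : X (2 * π) = -X 0 := by
    rw [hFRX, Pi.add_apply, Pi.add_apply, hRanti, neg_add] at hanti
    exact add_left_cancel hanti
  obtain ⟨rfl, rfl⟩ := eq_zero_of_smul_expVec_antiperiodic hr (by simpa [X] using hXanti)
  exact ⟨c₁, c₂, by simpa [X] using hFRX⟩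

theorem setOf_antiperiodic_solvesEuler_eq_span {n : ℕ} {ω a : ℝ} (hω : ω = n + 1 / 2)
    (hchar : (ω ^ 2 + 2 * β + 3) * (ω ^ 2 - β) = 4 * ω ^ 2) (ha : 2 * ω * a = ω ^ 2 - β)
    (hr : 0 < β - 1 + ω ^ 2) :
    {f : ℝ → ℝ × ℝ | ContDiff ℝ 2 f ∧ Antiperiodic f (2 * π) ∧ SolvesEuler β f} =
      ↑(Submodule.span ℝ {fun t => (a * sin (ω * t), cos (ω * t)),
        fun t => (a * cos (ω * t), -sin (ω * t))}) := by
  have hω0 : ω ≠ 0 := by rw [hω]; positivity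
  have h₁ : β + 2 * a * ω = ω ^ 2 := by linarith
  have h₂ : a * (ω ^ 2 + 2 * β + 3) = 2 * ω := mul_left_cancel₀ (mul_ne_zero two_ne_zero hω0) <| by
    linear_combination (ω ^ 2 + 2 * β + 3) * ha + hchar
  have hfst : ∀ c₁ c₂ : ℝ, c₁ • (fun t => (a * sin (ω * t), cos (ω * t))) +
      c₂ • (fun t => (a * cos (ω * t), -sin (ω * t))) = fun t =>
      ((c₁ • rotMode ω (rotVec₁ a ω) (rotVec₂ a ω) +
        c₂ • rotMode ω (rotVec₂ a ω) (-rotVec₁ a ω)) t).1 := by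
    intro c₁ c₂
    funext t
    simp [rotMode, rotVec₁, rotVec₂, mul_comm]
  ext f
  rw [SetLike.mem_coe, Submodule.mem_span_pair]
  constructor
  · rintro ⟨hf, hanti, hsol⟩
    obtain ⟨c₁, c₂, hF⟩ := (isSolution_of_solvesEuler hf hsol).exists_eq_rotMode hω
      (r := √(β - 1 + ω ^ 2)) (by positivity) h₁ h₂ (sq_sqrt hr.le)
      (Prod.ext hanti.eq hanti.deriv.eq)
    exact ⟨c₁, c₂, by rw [hfst, ← hF]⟩
  · rintro ⟨c₁, c₂, rfl⟩
    rw [hfst]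
    obtain ⟨hc, hs⟩ := (((isSolution_rotMode₁ h₁ h₂).const_smul c₁).add
      ((isSolution_rotMode₂ h₁ h₂).const_smul c₂)).solvesEuler_fst
    refine ⟨hc, fun t => ?_, hs⟩
    simp only [Pi.add_apply, Pi.smul_apply, antiperiodic_rotMode (E := State) hω _ _ t, smul_neg,
      neg_add, Prod.fst_add, Prod.fst_neg]

noncomputable def betaHat (θ : ℝ) : ℝ := (θ ^ 2 - 3 + √(9 * θ ^ 4 - 14 * θ ^ 2 + 9)) / 4

/-- `β̂_θ` is the larger root of `2β² + (3 - θ²)β + θ² - θ⁴`, which is (up to sign) the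
determinant of the characteristic matrix of `(E_β)` at `λ = iθ`. -/
theorem betaHat_char (θ : ℝ) :
    (θ ^ 2 + 2 * betaHat θ + 3) * (θ ^ 2 - betaHat θ) = 4 * θ ^ 2 := by
  have hD : 0 ≤ 9 * θ ^ 4 - 14 * θ ^ 2 + 9 := by nlinarith [sq_nonneg (3 * θ ^ 2 - 7 / 3)]
  unfold betaHat
  linear_combination (-1 / 8 : ℝ) * sq_sqrt hD

theorem one_sub_sq_lt_betaHat {θ : ℝ} (hθ : 1 < θ) : 1 - θ ^ 2 < betaHat θ := by
  suffices 7 - 5 * θ ^ 2 < √(9 * θ ^ 4 - 14 * θ ^ 2 + 9) by unfold betaHat; linarith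
  have hθ2 : 1 < θ ^ 2 := by nlinarith
  rcases lt_or_ge (7 - 5 * θ ^ 2) 0 with h | h
  · exact h.trans_le (sqrt_nonneg _)
  · rw [lt_sqrt h]
    nlinarith

end EulerSystem

open EulerSystem in
/-- At `β = β̂_{n+1/2}` (`n ≥ 1`), the `2π`-anti-periodic solutions of the Euler system at
`e = 0` are exactly the span of `t ↦ (ãₙ sin((n+1/2)t), cos((n+1/2)t))` and
`t ↦ (ãₙ cos((n+1/2)t), −sin((n+1/2)t))`, with `ãₙ = ((n+1/2)² − β̂_{n+1/2})/(2n+1)`. -/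
theorem euler_antiperiodic_kernel (n : ℕ) (hn : 1 ≤ n) (β a : ℝ)
    (hβ : β = (((n : ℝ) + 1 / 2) ^ 2 - 3
        + Real.sqrt (9 * ((n : ℝ) + 1 / 2) ^ 4 - 14 * ((n : ℝ) + 1 / 2) ^ 2 + 9)) / 4)
    (ha : a = (((n : ℝ) + 1 / 2) ^ 2 - β) / (2 * (n : ℝ) + 1)) :
    {f : ℝ → ℝ × ℝ | ContDiff ℝ 2 f ∧ (∀ t, f (t + 2 * Real.pi) = -f t) ∧
      ∀ t, (deriv (deriv f) t).1 = (2 * β + 3) * (f t).1 + 2 * (deriv f t).2 ∧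
           (deriv (deriv f) t).2 = -β * (f t).2 - 2 * (deriv f t).1}
    = ↑(Submodule.span ℝ
        {(fun t : ℝ => (a * Real.sin (((n : ℝ) + 1 / 2) * t), Real.cos (((n : ℝ) + 1 / 2) * t))),
         (fun t : ℝ => (a * Real.cos (((n : ℝ) + 1 / 2) * t), -Real.sin (((n : ℝ) + 1 / 2) * t)))}) := by
  have hω : (1 : ℝ) < n + 1 / 2 := by
    have : (1 : ℝ) ≤ n := by exact_mod_cast hn
    linarith
  have hβ' : β = betaHat (n + 1 / 2) := hβ
  refine setOf_antiperiodic_solvesEuler_eq_span rfl (hβ' ▸ betaHat_char _) ?_ ?_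
  · rw [ha]
    field_simp
  · linarith [one_sub_sq_lt_betaHat hω]
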